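/- A consumer's optimal oblivious value is asymptotically achieved in the n-consumer game under a DOE strategy: if all consumers (including i) use a DOE strategy ν of the continuum game, then lim_{n→∞} ( Ṽ_{i,0}(x₀, s₀ | ν, ν) − Vⁿ_{i,0}(x₀, s₀ | ν, ν) ) = 0 for every s₀ ∈ 𝒮 and x₀ ∈ 𝒳₀. -/

import Mathlib

/-!
Dynamic pricing model of Tsitsiklis and Xu, "Pricing of Fluctuations in
Electricity Markets".

* `S` : finite exogenous state space, evolving as a Markov chain with kernel `K`;
* `X0` : finite set of consumer types, with type distribution `eta s0` given the
  initial exogenous state `s0`;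
* actions lie in `[0, B]`, internal states in `[0, Zbd]`, updated by `r`;
* `U t x z s a` : stage utility; `Cc`, `Hc0`, `Hc` : continuum primary and
  ancillary cost functions, with (partial) derivatives `dC`, `dH0`, `dH1`
  (w.r.t. the first demand argument) and `dH2` (w.r.t. the second).
In the `n`-consumer model the costs scale as `Cⁿ(A,s) = n * Cc (A/n) s` etc., so
the `n`-consumer prices are the continuum marginal costs evaluated at the
per-capita demand `A / n`.
-/

noncomputable section

structure ElecModel (S : Type*) (X0 : Type*) [Fintype S] [DecidableEq S] [Fintype X0] where
  T : ℕ
  B : ℝ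
  B_pos : 0 < B
  Zbd : ℝ
  K : S → S → ℝ
  K_nonneg : ∀ s s', 0 ≤ K s s'
  K_sum : ∀ s, ∑ s' : S, K s s' = 1
  eta : S → X0 → ℝ
  eta_nonneg : ∀ s x, 0 ≤ eta s x
  eta_sum : ∀ s, ∑ x : X0, eta s x = 1
  r : X0 → ℝ → ℝ → S → ℝ
  U : ℕ → X0 → ℝ → S → ℝ → ℝ
  Cc : ℝ → S → ℝ
  Hc0 : ℝ → S → ℝ
  Hc : ℝ → ℝ → S → S → ℝ
  dC : ℝ → S → ℝ
  dH0 : ℝ → S → ℝ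
  dH1 : ℝ → ℝ → S → S → ℝ
  dH2 : ℝ → ℝ → S → S → ℝ

namespace ElecModel

variable {S : Type*} {X0 : Type*} [Fintype S] [DecidableEq S] [Fintype X0] [DecidableEq X0]

/-- A dynamic oblivious strategy: the action depends only on the consumer's type and
the history of exogenous states up to the current stage. -/
structure OblStrategy (M : ElecModel S X0) where
  act : ℕ → X0 → (ℕ → S) → ℝ
  act_mem : ∀ t x h, act t x h ∈ Set.Icc (0 : ℝ) M.B
  act_prefix : ∀ t x h h', (∀ τ ≤ t, h τ = h' τ) → act t x h = act t x h'

/-- A history-dependent strategy: the action depends on the consumer's augmented state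
`(previous action, type, internal state)`, the history of exogenous states up to the
current stage, and the empirical distribution (as a multiset) of the other consumers'
augmented states. -/
structure HistStrategy (M : ElecModel S X0) where
  act : ℕ → ℝ × X0 × ℝ → (ℕ → S) → Multiset (ℝ × X0 × ℝ) → ℝ
  act_mem : ∀ t y h f, act t y h f ∈ Set.Icc (0 : ℝ) M.B
  act_prefix : ∀ t y h h' f, (∀ τ ≤ t, h τ = h' τ) → act t y h f = act t y h' f

/-- Probability of the Markov chain of exogenous states following `h` on stages `0,…,T`,
starting from `s0`. -/
def histProb (M : ElecModel S X0) (s0 : S) (h : ℕ → S) : ℝ :=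
  (if h 0 = s0 then (1 : ℝ) else 0) * ∏ t ∈ Finset.range M.T, M.K (h t) (h (t + 1))

def extendHist (M : ElecModel S X0) (g : Fin (M.T + 1) → S) : ℕ → S :=
  fun n => g ⟨min n M.T, Nat.lt_succ_of_le (min_le_right n M.T)⟩

/-- Expectation, over the Markov histories of exogenous states starting at `s0`,
of a function of the history. -/
def expectHist (M : ElecModel S X0) (s0 : S) (F : (ℕ → S) → ℝ) : ℝ :=
  ∑ g : Fin (M.T + 1) → S, M.histProb s0 (M.extendHist g) * F (M.extendHist g)

/-- The internal state trajectory of a consumer of type `x` along history `h`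
under the action sequence `a` : `z 0 = 0`, `z (t+1) = r x (z t) (a t) (h (t+1))`. -/
def zTraj (M : ElecModel S X0) (x : X0) (h : ℕ → S) (a : ℕ → ℝ) : ℕ → ℝ
  | 0 => 0
  | t + 1 => M.zTraj x h a t |> fun z => M.r x z (a t) (h (t + 1))

/-- Average (per-capita) demand in the continuum model under the oblivious strategy `ν`. -/
def avgDemand (M : ElecModel S X0) (ν : OblStrategy M) (s0 : S) (h : ℕ → S) (t : ℕ) : ℝ :=
  ∑ x : X0, M.eta s0 x * ν.act t x h

/-- Continuum price `p̃_t`. -/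
def pTil (M : ElecModel S X0) (ν : OblStrategy M) (s0 : S) (h : ℕ → S) (t : ℕ) : ℝ :=
  M.dC (M.avgDemand ν s0 h t) (h t)

/-- Continuum price `w̃_t`. -/
def wTil (M : ElecModel S X0) (ν : OblStrategy M) (s0 : S) (h : ℕ → S) : ℕ → ℝ
  | 0 => M.dH0 (M.avgDemand ν s0 h 0) (h 0)
  | t + 1 => M.dH2 (M.avgDemand ν s0 h t) (M.avgDemand ν s0 h (t + 1)) (h t) (h (t + 1))

/-- Continuum price `q̃_t` (charged on the previous stage's demand). -/
def qTil (M : ElecModel S X0) (ν : OblStrategy M) (s0 : S) (h : ℕ → S) : ℕ → ℝ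
  | 0 => 0
  | t + 1 => M.dH1 (M.avgDemand ν s0 h t) (M.avgDemand ν s0 h (t + 1)) (h t) (h (t + 1))

/-- Total oblivious stage value along a history: consumer of type `x` follows `νhat`,
prices are induced by `ν`. -/
def oblStageSum (M : ElecModel S X0) (νhat ν : OblStrategy M) (s0 : S) (x : X0)
    (h : ℕ → S) : ℝ :=
  ∑ t ∈ Finset.range (M.T + 1),
    (M.U t x (M.zTraj x h (fun τ => νhat.act τ x h) t) (h t) (νhat.act t x h)
      - (M.pTil ν s0 h t + M.wTil ν s0 h t) * νhat.act t x h
      - M.qTil ν s0 h t * (if t = 0 then 0 else νhat.act (t - 1) x h))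

/-- Oblivious value function `Ṽ_{i,0}(x₀, s₀ ∣ ν̂, ν)`. -/
def oblValue (M : ElecModel S X0) (νhat ν : OblStrategy M) (x0 : X0) (s0 : S) : ℝ :=
  M.expectHist s0 (fun h => M.oblStageSum νhat ν s0 x0 h)

/-- A Dynamic Oblivious Equilibrium. -/
def IsDOE (M : ElecModel S X0) (ν : OblStrategy M) : Prop :=
  ∀ (νhat : OblStrategy M) (x0 : X0) (s0 : S),
    M.oblValue νhat ν x0 s0 ≤ M.oblValue ν ν x0 s0

/-- The previous action of a consumer following the oblivious strategy `ν` (zero at stage 0). -/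
def prevActObl (M : ElecModel S X0) (ν : OblStrategy M) (x : X0) (h : ℕ → S) : ℕ → ℝ
  | 0 => 0
  | t + 1 => ν.act t x h

/-- The empirical distribution (multiset) of the augmented states of the `m` consumers
other than `i`, all following the oblivious strategy `ν`, with type profile `ω`. -/
def othersAug (M : ElecModel S X0) (m : ℕ) (ν : OblStrategy M) (ω : Fin m → X0)
    (h : ℕ → S) (t : ℕ) : Multiset (ℝ × X0 × ℝ) :=
  (Finset.univ : Finset (Fin m)).val.map
    (fun j => (M.prevActObl ν (ω j) h t, ω j, M.zTraj (ω j) h (fun τ => ν.act τ (ω j) h) t))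

/-- Consumer `i`'s trajectory `(action at t, internal state at t)` in the `(m+1)`-consumer
game when she plays the history-dependent strategy `κ` while the `m` other consumers
(with type profile `ω`) play the oblivious strategy `ν`. -/
def iTraj (M : ElecModel S X0) (m : ℕ) (κ : HistStrategy M) (ν : OblStrategy M)
    (x0 : X0) (ω : Fin m → X0) (h : ℕ → S) : ℕ → ℝ × ℝ
  | 0 => (κ.act 0 ((0 : ℝ), x0, (0 : ℝ)) h (M.othersAug m ν ω h 0), 0)
  | t + 1 =>
      M.iTraj m κ ν x0 ω h t |> fun prev =>
        (M.r x0 prev.2 prev.1 (h (t + 1))) |> fun z' =>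
          (κ.act (t + 1) (prev.1, x0, z') h (M.othersAug m ν ω h (t + 1)), z')

/-- Aggregate demand in the `(m+1)`-consumer game. -/
def aggDemandN (M : ElecModel S X0) (m : ℕ) (κ : HistStrategy M) (ν : OblStrategy M)
    (x0 : X0) (ω : Fin m → X0) (h : ℕ → S) (t : ℕ) : ℝ :=
  (M.iTraj m κ ν x0 ω h t).1 + ∑ j : Fin m, ν.act t (ω j) h

/-- `n`-consumer price `p_t = (Cⁿ)'(A_t, s_t) = C̃'(A_t/n, s_t)`, with `n = m+1`. -/
def pN (M : ElecModel S X0) (m : ℕ) (κ : HistStrategy M) (ν : OblStrategy M)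
    (x0 : X0) (ω : Fin m → X0) (h : ℕ → S) (t : ℕ) : ℝ :=
  M.dC (M.aggDemandN m κ ν x0 ω h t / ((m : ℝ) + 1)) (h t)

/-- `n`-consumer price `w_t`, with `n = m+1`. -/
def wN (M : ElecModel S X0) (m : ℕ) (κ : HistStrategy M) (ν : OblStrategy M)
    (x0 : X0) (ω : Fin m → X0) (h : ℕ → S) : ℕ → ℝ
  | 0 => M.dH0 (M.aggDemandN m κ ν x0 ω h 0 / ((m : ℝ) + 1)) (h 0)
  | t + 1 =>
      M.dH2 (M.aggDemandN m κ ν x0 ω h t / ((m : ℝ) + 1))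
        (M.aggDemandN m κ ν x0 ω h (t + 1) / ((m : ℝ) + 1)) (h t) (h (t + 1))

/-- `n`-consumer price `q_t` (charged on the previous stage's demand), with `n = m+1`. -/
def qN (M : ElecModel S X0) (m : ℕ) (κ : HistStrategy M) (ν : OblStrategy M)
    (x0 : X0) (ω : Fin m → X0) (h : ℕ → S) : ℕ → ℝ
  | 0 => 0
  | t + 1 =>
      M.dH1 (M.aggDemandN m κ ν x0 ω h t / ((m : ℝ) + 1))
        (M.aggDemandN m κ ν x0 ω h (t + 1) / ((m : ℝ) + 1)) (h t) (h (t + 1))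

/-- Consumer `i`'s total payoff along the history `h`. -/
def iPayoff (M : ElecModel S X0) (m : ℕ) (κ : HistStrategy M) (ν : OblStrategy M)
    (x0 : X0) (ω : Fin m → X0) (h : ℕ → S) : ℝ :=
  ∑ t ∈ Finset.range (M.T + 1),
    (M.U t x0 (M.iTraj m κ ν x0 ω h t).2 (h t) (M.iTraj m κ ν x0 ω h t).1
      - (M.pN m κ ν x0 ω h t + M.wN m κ ν x0 ω h t) * (M.iTraj m κ ν x0 ω h t).1
      - M.qN m κ ν x0 ω h t * (if t = 0 then 0 else (M.iTraj m κ ν x0 ω h (t - 1)).1))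

/-- Consumer `i`'s expected payoff `Vⁿ_{i,0}(x₀, s₀ ∣ κ, ν)` in the `(m+1)`-consumer game:
the other `m` consumers' types are drawn i.i.d. from `eta s0` and all of them use `ν`. -/
def Vn (M : ElecModel S X0) (m : ℕ) (κ : HistStrategy M) (ν : OblStrategy M)
    (x0 : X0) (s0 : S) : ℝ :=
  ∑ ω : Fin m → X0, (∏ j : Fin m, M.eta s0 (ω j)) *
    M.expectHist s0 (fun h => M.iPayoff m κ ν x0 ω h)

/-- An oblivious strategy regarded as a history-dependent strategy. -/
def OblStrategy.toHist {M : ElecModel S X0} (ν : OblStrategy M) : HistStrategy M where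
  act := fun t y h _ => ν.act t y.2.1 h
  act_mem := fun t y h _ => ν.act_mem t y.2.1 h
  act_prefix := fun t y h h' _ hp => ν.act_prefix t y.2.1 h h' hp

/-- Stage social welfare in the continuum model. -/
def contStageWelfare (M : ElecModel S X0) (ν : OblStrategy M) (s0 : S) (h : ℕ → S)
    (t : ℕ) : ℝ :=
  (∑ x : X0, M.eta s0 x *
      M.U t x (M.zTraj x h (fun τ => ν.act τ x h) t) (h t) (ν.act t x h))
    - M.Cc (M.avgDemand ν s0 h t) (h t)
    - (if t = 0 then M.Hc0 (M.avgDemand ν s0 h 0) (h 0)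
        else M.Hc (M.avgDemand ν s0 h (t - 1)) (M.avgDemand ν s0 h t) (h (t - 1)) (h t))

/-- Expected social welfare `W̃₀(s₀ ∣ ν)` in the continuum model. -/
def contWelfare (M : ElecModel S X0) (ν : OblStrategy M) (s0 : S) : ℝ :=
  M.expectHist s0 (fun h => ∑ t ∈ Finset.range (M.T + 1), M.contStageWelfare ν s0 h t)

/-- Joint trajectory `(action at t, internal state at t)` of the `n` consumers with type
profile `ω` when all of them use the history-dependent strategy `κ`. -/
def jointTraj (M : ElecModel S X0) (n : ℕ) (κ : HistStrategy M) (ω : Fin n → X0)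
    (h : ℕ → S) : ℕ → Fin n → ℝ × ℝ
  | 0 => fun i =>
      (κ.act 0 ((0 : ℝ), ω i, (0 : ℝ)) h
        (((Finset.univ : Finset (Fin n)).erase i).val.map fun j => ((0 : ℝ), ω j, (0 : ℝ))), 0)
  | t + 1 => fun i =>
      M.jointTraj n κ ω h t |> fun prev =>
        (fun j : Fin n => ((prev j).1, ω j, M.r (ω j) (prev j).2 (prev j).1 (h (t + 1))))
          |> fun aug =>
            (κ.act (t + 1) (aug i) h (((Finset.univ : Finset (Fin n)).erase i).val.map aug),
              M.r (ω i) (prev i).2 (prev i).1 (h (t + 1)))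

/-- Aggregate demand in the `n`-consumer game when everyone uses `κ`. -/
def aggDemandAll (M : ElecModel S X0) (n : ℕ) (κ : HistStrategy M) (ω : Fin n → X0)
    (h : ℕ → S) (t : ℕ) : ℝ :=
  ∑ i : Fin n, (M.jointTraj n κ ω h t i).1

/-- Realized total social welfare along the history `h` in the `n`-consumer game under the
symmetric strategy profile `(κ,…,κ)`; the `n`-consumer costs are `n * C̃(A/n)` etc. -/
def welfProfile (M : ElecModel S X0) (n : ℕ) (κ : HistStrategy M) (ω : Fin n → X0)
    (h : ℕ → S) : ℝ :=
  ∑ t ∈ Finset.range (M.T + 1),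
    ((∑ i : Fin n, M.U t (ω i) (M.jointTraj n κ ω h t i).2 (h t) (M.jointTraj n κ ω h t i).1)
      - (n : ℝ) * M.Cc (M.aggDemandAll n κ ω h t / n) (h t)
      - (if t = 0 then (n : ℝ) * M.Hc0 (M.aggDemandAll n κ ω h 0 / n) (h 0)
          else (n : ℝ) * M.Hc (M.aggDemandAll n κ ω h (t - 1) / n)
                 (M.aggDemandAll n κ ω h t / n) (h (t - 1)) (h t)))

/-- Expected social welfare `𝒲ⁿ₀` in the `n`-consumer game under the symmetric
profile `(κ,…,κ)`, the expectation taken over the i.i.d. consumer types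
(equivalently, over the initial population state) and the Markov exogenous states. -/
def expWelfN (M : ElecModel S X0) (n : ℕ) (κ : HistStrategy M) (s0 : S) : ℝ :=
  ∑ ω : Fin n → X0, (∏ i : Fin n, M.eta s0 (ω i)) *
    M.expectHist s0 (fun h => M.welfProfile n κ ω h)

/-- Cumulative utility `Ū_{h_T}(x₀, a₀, …, a_T)` of a type-`x₀` consumer along history `h`
as a function of her action sequence, the internal states being generated by `r`. -/
def cumUtility (M : ElecModel S X0) (x0 : X0) (h : ℕ → S) (a : ℕ → ℝ) : ℝ :=
  ∑ t ∈ Finset.range (M.T + 1), M.U t x0 (M.zTraj x0 h a t) (h t) (a t)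

/-- The initial population state (empirical type distribution) of the type profile `ω`. -/
def popState (n : ℕ) (ω : Fin n → X0) (x : X0) : ℝ :=
  ((Finset.univ.filter fun i => ω i = x).card : ℝ) / n

/-- Assumptions 1–3 of the paper: differentiability of the cost functions, monotone
primary cost, marginal costs bounded by `P` and uniformly equicontinuous on `[0,∞)`,
utilities with values in `[0,Q]` and continuous in the action, internal states
staying in `[0, Zbd]`. -/
structure RegularAssumptions (M : ElecModel S X0) (P Q : ℝ) : Prop where
  deriv_C : ∀ s : S, ∀ A ∈ Set.Ici (0 : ℝ),
    HasDerivWithinAt (fun u => M.Cc u s) (M.dC A s) (Set.Ici 0) A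
  deriv_H0 : ∀ s : S, ∀ A ∈ Set.Ici (0 : ℝ),
    HasDerivWithinAt (fun u => M.Hc0 u s) (M.dH0 A s) (Set.Ici 0) A
  deriv_H1 : ∀ (s s' : S) (A' : ℝ), ∀ A ∈ Set.Ici (0 : ℝ),
    HasDerivWithinAt (fun u => M.Hc u A' s s') (M.dH1 A A' s s') (Set.Ici 0) A
  deriv_H2 : ∀ (s s' : S) (A : ℝ), ∀ A' ∈ Set.Ici (0 : ℝ),
    HasDerivWithinAt (fun u => M.Hc A u s s') (M.dH2 A A' s s') (Set.Ici 0) A'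
  C_mono : ∀ s : S, MonotoneOn (fun u => M.Cc u s) (Set.Ici 0)
  bound_C : ∀ s : S, ∀ A ∈ Set.Ici (0 : ℝ), |M.dC A s| ≤ P
  bound_H0 : ∀ s : S, ∀ A ∈ Set.Ici (0 : ℝ), |M.dH0 A s| ≤ P
  bound_H1 : ∀ (s s' : S), ∀ A' ∈ Set.Icc (0 : ℝ) M.B, ∀ A ∈ Set.Ici (0 : ℝ),
    |M.dH1 A A' s s'| ≤ P
  bound_H2 : ∀ (s s' : S), ∀ A' ∈ Set.Icc (0 : ℝ) M.B, ∀ A ∈ Set.Ici (0 : ℝ),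
    |M.dH2 A' A s s'| ≤ P
  equicont_C : ∀ ε > (0 : ℝ), ∃ δ > (0 : ℝ), ∀ s : S, ∀ A ∈ Set.Ici (0 : ℝ),
    ∀ A2 ∈ Set.Ici (0 : ℝ), |A - A2| ≤ δ → |M.dC A s - M.dC A2 s| ≤ ε
  equicont_H0 : ∀ ε > (0 : ℝ), ∃ δ > (0 : ℝ), ∀ s : S, ∀ A ∈ Set.Ici (0 : ℝ),
    ∀ A2 ∈ Set.Ici (0 : ℝ), |A - A2| ≤ δ → |M.dH0 A s - M.dH0 A2 s| ≤ ε
  equicont_H1 : ∀ ε > (0 : ℝ), ∃ δ > (0 : ℝ), ∀ (s s' : S), ∀ A' ∈ Set.Icc (0 : ℝ) M.B,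
    ∀ A ∈ Set.Ici (0 : ℝ), ∀ A2 ∈ Set.Ici (0 : ℝ),
      |A - A2| ≤ δ → |M.dH1 A A' s s' - M.dH1 A2 A' s s'| ≤ ε
  equicont_H2 : ∀ ε > (0 : ℝ), ∃ δ > (0 : ℝ), ∀ (s s' : S), ∀ A' ∈ Set.Icc (0 : ℝ) M.B,
    ∀ A ∈ Set.Ici (0 : ℝ), ∀ A2 ∈ Set.Ici (0 : ℝ),
      |A - A2| ≤ δ → |M.dH2 A' A s s' - M.dH2 A' A2 s s'| ≤ ε
  U_bounds : ∀ (t : ℕ) (x : X0) (z : ℝ) (s : S) (a : ℝ), M.U t x z s a ∈ Set.Icc (0 : ℝ) Q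
  U_cont : ∀ (t : ℕ) (x : X0) (z : ℝ) (s : S), Continuous fun a => M.U t x z s a
  Zbd_nonneg : 0 ≤ M.Zbd
  r_mem : ∀ (x : X0) (z a : ℝ) (s' : S), z ∈ Set.Icc (0 : ℝ) M.Zbd →
    a ∈ Set.Icc (0 : ℝ) M.B → M.r x z a s' ∈ Set.Icc (0 : ℝ) M.Zbd

/-- Assumption 4 of the paper (convexity): convex costs, concave cumulative utility,
monotone internal-state maps with one-sided derivatives, and utilities with one-sided
derivatives in the internal state. -/
structure ConvexAssumptions (M : ElecModel S X0) : Prop where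
  C_convex : ∀ s : S, ConvexOn ℝ Set.univ (fun A => M.Cc A s)
  H_convex : ∀ s s' : S, ConvexOn ℝ Set.univ (fun p : ℝ × ℝ => M.Hc p.1 p.2 s s')
  cumU_concave : ∀ (x0 : X0) (h : ℕ → S),
    ConcaveOn ℝ {a : ℕ → ℝ | ∀ t, a t ∈ Set.Icc (0 : ℝ) M.B} (fun a => M.cumUtility x0 h a)
  k_monotone : ∀ (x0 : X0) (h : ℕ → S) (t τ : ℕ), τ < t → ∀ a : ℕ → ℝ,
    Monotone (fun u => M.zTraj x0 h (Function.update a τ u) t) ∨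
      Antitone (fun u => M.zTraj x0 h (Function.update a τ u) t)
  k_onesided : ∀ (x0 : X0) (h : ℕ → S) (t τ : ℕ) (a : ℕ → ℝ) (u : ℝ),
    (∃ d, HasDerivWithinAt (fun v => M.zTraj x0 h (Function.update a τ v) t) d (Set.Ici u) u) ∧
    (∃ d, HasDerivWithinAt (fun v => M.zTraj x0 h (Function.update a τ v) t) d (Set.Iic u) u)
  U_z_onesided : ∀ (t : ℕ) (x : X0) (s : S) (a z : ℝ),
    (∃ d, HasDerivWithinAt (fun z' => M.U t x z' s a) d (Set.Ici z) z) ∧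
    (∃ d, HasDerivWithinAt (fun z' => M.U t x z' s a) d (Set.Iic z) z)

end ElecModel

/-!
When everybody plays `ν`, consumer `i` acts and moves in the `n`-consumer game exactly as in the
continuum model, so the two values differ only through the prices, and the payoff gap along a
history is at most `B` times the sum of the price gaps. Each `n`-consumer price is a bounded
marginal cost evaluated at the per-capita demands of two consecutive stages. These are averages of
i.i.d. actions, so they converge in mean square, at rate `B² / n`, to the continuum demands. The
marginal costs are jointly continuous at the continuum demands (continuity of `∂H/∂A_t` in
`A_{t-1}` comes from approximating it uniformly by difference quotients of `H`), and bounded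
functions continuous at the limit of a mean-square convergent sequence converge in mean.
-/

open Filter Topology Set Finset

/-- `F · w₀` is the uniform limit of the difference quotients `(G a (w₀ + δ) - G a w₀) / δ`,
which are continuous in `a`. -/
theorem continuousWithinAt_of_hasDerivWithinAt_of_equicontinuous {α : Type*}
    [TopologicalSpace α] {G F : α → ℝ → ℝ} {s : Set α} {a₀ : α} {w₀ : ℝ} (ha₀ : a₀ ∈ s)
    (hw₀ : 0 ≤ w₀)
    (hderiv : ∀ a ∈ s, ∀ w, 0 ≤ w → HasDerivWithinAt (G a) (F a w) (Ici 0) w)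
    (hequi : ∀ ε > 0, ∃ δ > 0, ∀ a ∈ s, ∀ w, 0 ≤ w → |w - w₀| ≤ δ → |F a w - F a w₀| ≤ ε)
    (hcont : ∀ w, ContinuousWithinAt (G · w) s a₀) :
    ContinuousWithinAt (F · w₀) s a₀ := by
  refine continuousWithinAt_of_locally_uniform_approx_of_continuousWithinAt ha₀ fun u hu => ?_
  obtain ⟨ε, hε, hεu⟩ := Metric.mem_uniformity_dist.1 hu
  obtain ⟨δ, hδ, hδF⟩ := hequi (ε / 2) (half_pos hε)
  refine ⟨s, self_mem_nhdsWithin, fun a => (G a (w₀ + δ) - G a w₀) / δ,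
    ((hcont _).sub (hcont _)).div_const δ, fun a ha => hεu ?_⟩
  obtain ⟨c, hc, hslope⟩ := exists_hasDerivAt_eq_slope (G a) (F a) (lt_add_of_pos_right w₀ hδ)
    (fun w hw => (hderiv a ha w (hw₀.trans hw.1)).continuousWithinAt.mono
      fun y hy => hw₀.trans hy.1)
    (fun w hw => (hderiv a ha w (hw₀.trans hw.1.le)).hasDerivAt
      (Ici_mem_nhds (hw₀.trans_lt hw.1)))
  rw [add_sub_cancel_left] at hslope
  dsimp only
  rw [Real.dist_eq, ← hslope, abs_sub_comm]
  refine (hδF a ha c (hw₀.trans hc.1.le) ?_).trans_lt (half_lt_self hε)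
  rw [abs_le]
  constructor <;> linarith [hc.1, hc.2]

section MetricEstimates

variable {α β γ : Type*} [PseudoMetricSpace α] [PseudoMetricSpace β] [PseudoMetricSpace γ]

theorem ContinuousWithinAt.exists_dist_le_add_mul_dist_sq {G : α → β} {D : Set α} {x₀ : α}
    {K : ℝ} (hG : ContinuousWithinAt G D x₀) (hK : ∀ x ∈ D, dist (G x) (G x₀) ≤ K)
    {ε : ℝ} (hε : 0 < ε) :
    ∃ c, 0 ≤ c ∧ ∀ x ∈ D, dist (G x) (G x₀) ≤ ε + c * dist x x₀ ^ 2 := by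
  obtain ⟨δ, hδ, hGδ⟩ := Metric.continuousWithinAt_iff.1 hG ε hε
  refine ⟨max K 0 / δ ^ 2, by positivity, fun x hx => ?_⟩
  have hc : 0 ≤ max K 0 / δ ^ 2 * dist x x₀ ^ 2 := by positivity
  rcases lt_or_ge (dist x x₀) δ with hnear | hfar
  · linarith [hGδ hx hnear]
  · have hK' : max K 0 ≤ max K 0 / δ ^ 2 * dist x x₀ ^ 2 := by
      rw [div_mul_eq_mul_div, le_div_iff₀ (by positivity)]
      exact mul_le_mul_of_nonneg_left (pow_le_pow_left₀ hδ.le hfar 2) (le_max_right _ _)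
    linarith [hK x hx, le_max_left K 0]

theorem tendsto_sum_mul_dist_of_continuousWithinAt {ι : ℕ → Type*} [∀ m, Fintype (ι m)]
    {w : ∀ m, ι m → ℝ} (hw0 : ∀ m i, 0 ≤ w m i) (hw1 : ∀ m, ∑ i, w m i = 1)
    {D : Set α} {x₀ : α} {Y : ∀ m, ι m → α} (hY : ∀ m i, Y m i ∈ D)
    (hconc : Tendsto (fun m => ∑ i, w m i * dist (Y m i) x₀ ^ 2) atTop (𝓝 0))
    {G : α → β} {K : ℝ} (hG : ContinuousWithinAt G D x₀)
    (hK : ∀ x ∈ D, dist (G x) (G x₀) ≤ K) :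
    Tendsto (fun m => ∑ i, w m i * dist (G (Y m i)) (G x₀)) atTop (𝓝 0) := by
  refine tendsto_order.2 ⟨fun a ha => Eventually.of_forall fun m =>
    ha.trans_le (sum_nonneg fun i _ => mul_nonneg (hw0 m i) dist_nonneg), fun a ha => ?_⟩
  obtain ⟨c, -, hc⟩ := hG.exists_dist_le_add_mul_dist_sq hK (half_pos ha)
  have hsmall : ∀ᶠ m in atTop, c * ∑ i, w m i * dist (Y m i) x₀ ^ 2 < a / 2 :=
    (hconc.const_mul c).eventually (gt_mem_nhds (by simpa using half_pos ha))
  filter_upwards [hsmall] with m hm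
  calc ∑ i, w m i * dist (G (Y m i)) (G x₀)
      ≤ ∑ i, w m i * (a / 2 + c * dist (Y m i) x₀ ^ 2) :=
        sum_le_sum fun i _ => mul_le_mul_of_nonneg_left (hc _ (hY m i)) (hw0 m i)
    _ = a / 2 + c * ∑ i, w m i * dist (Y m i) x₀ ^ 2 := by
        simp only [mul_add, sum_add_distrib, ← sum_mul, hw1, one_mul, mul_sum]
        exact congrArg _ (sum_congr rfl fun i _ => mul_left_comm _ _ _)
    _ < a := by linarith

theorem continuousWithinAt_uncurry_of_equicontinuous {F : α → β → γ} {s : Set α} {t : Set β}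
    {a₀ : α} {b₀ : β}
    (hequi : ∀ ε > 0, ∃ δ > 0, ∀ a ∈ s, ∀ b ∈ t, dist b b₀ ≤ δ → dist (F a b) (F a b₀) ≤ ε)
    (hcont : ContinuousWithinAt (F · b₀) s a₀) :
    ContinuousWithinAt (Function.uncurry F) (s ×ˢ t) (a₀, b₀) := by
  refine Metric.continuousWithinAt_iff.2 fun ε hε => ?_
  obtain ⟨δ₁, hδ₁, h₁⟩ := hequi (ε / 2) (half_pos hε)
  obtain ⟨δ₂, hδ₂, h₂⟩ := Metric.continuousWithinAt_iff.1 hcont (ε / 2) (half_pos hε)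
  refine ⟨min δ₁ δ₂, lt_min hδ₁ hδ₂, fun ⟨a, b⟩ ⟨ha, hb⟩ hd => ?_⟩
  rw [Prod.dist_eq, max_lt_iff, lt_min_iff, lt_min_iff] at hd
  calc dist (F a b) (F a₀ b₀) ≤ dist (F a b) (F a b₀) + dist (F a b₀) (F a₀ b₀) :=
        dist_triangle _ _ _
    _ < ε / 2 + ε / 2 := add_lt_add_of_le_of_lt (h₁ a ha b hb hd.2.1.le) (h₂ ha hd.1.2)
    _ = ε := add_halves ε

end MetricEstimates

theorem sq_add_sum_div_sub_le {m : ℕ} (a₀ μ : ℝ) (f : Fin m → ℝ) :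
    ((a₀ + ∑ j, f j) / ((m : ℝ) + 1) - μ) ^ 2
      ≤ (2 * (a₀ - μ) ^ 2 + 2 * (∑ j, (f j - μ)) ^ 2) / ((m : ℝ) + 1) ^ 2 := by
  have hm : (0 : ℝ) < m + 1 := by positivity
  rw [div_sub' hm.ne', div_pow, sum_sub_distrib, sum_const, card_univ, Fintype.card_fin,
    nsmul_eq_mul]
  gcongr
  nlinarith [sq_nonneg (a₀ - μ - (∑ j, f j - m * μ))]

section IidSums

variable {X : Type*} [Fintype X] {η : X → ℝ} {m : ℕ}

theorem sum_prod_eq_one (hη : ∑ x, η x = 1) (m : ℕ) : ∑ ω : Fin m → X, ∏ l, η (ω l) = 1 := by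
  rw [← Fintype.sum_pow, hη, one_pow]

theorem sum_prod_mul_prod (η : X → ℝ) (φ : Fin m → X → ℝ) :
    ∑ ω : Fin m → X, (∏ l, η (ω l)) * ∏ l, φ l (ω l) = ∏ l, ∑ x, η x * φ l x := by
  rw [Fintype.prod_sum]
  simp only [prod_mul_distrib]

theorem sum_prod_mul_mul (hη : ∑ x, η x = 1) {g : X → ℝ} (hg : ∑ x, η x * g x = 0)
    (j k : Fin m) :
    ∑ ω : Fin m → X, (∏ l, η (ω l)) * (g (ω j) * g (ω k)) =
      if j = k then ∑ x, η x * g x ^ 2 else 0 := by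
  set φ : Fin m → X → ℝ := fun l x => (if l = j then g x else 1) * (if l = k then g x else 1)
  have hφ : ∀ ω : Fin m → X, g (ω j) * g (ω k) = ∏ l, φ l (ω l) := fun ω => by
    simp only [φ, prod_mul_distrib, prod_ite_eq', Finset.mem_univ, ite_true]
  simp only [hφ, sum_prod_mul_prod]
  split_ifs with hjk
  · subst hjk
    rw [Fintype.prod_eq_single j fun l hl => by simp [φ, hl, hη]]
    simp [φ, sq]
  · exact prod_eq_zero (mem_univ j) (by simpa [φ, hjk, mul_comm] using hg)

theorem sum_prod_mul_sq_sum (hη : ∑ x, η x = 1) {g : X → ℝ} (hg : ∑ x, η x * g x = 0) :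
    ∑ ω : Fin m → X, (∏ l, η (ω l)) * (∑ j, g (ω j)) ^ 2 = m * ∑ x, η x * g x ^ 2 := by
  have hsq : ∀ ω : Fin m → X, (∑ j, g (ω j)) ^ 2 = ∑ j, ∑ k, g (ω j) * g (ω k) := fun ω => by
    rw [sq, sum_mul_sum]
  calc _ = ∑ j : Fin m, ∑ k : Fin m, ∑ ω : Fin m → X, (∏ l, η (ω l)) * (g (ω j) * g (ω k)) := by
        simp only [hsq, mul_sum]
        rw [sum_comm]
        exact sum_congr rfl fun j _ => sum_comm
    _ = m * ∑ x, η x * g x ^ 2 := by simp [sum_prod_mul_mul hη hg]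

theorem sum_prod_mul_sq_avg_sub_le (hη0 : ∀ x, 0 ≤ η x) (hη : ∑ x, η x = 1) {B a₀ : ℝ}
    {f : X → ℝ} (hf : ∀ x, f x ∈ Icc 0 B) (ha₀ : a₀ ∈ Icc 0 B) :
    ∑ ω : Fin m → X, (∏ l, η (ω l)) *
        ((a₀ + ∑ j, f (ω j)) / ((m : ℝ) + 1) - ∑ x, η x * f x) ^ 2
      ≤ 2 * B ^ 2 / ((m : ℝ) + 1) := by
  set μ := ∑ x, η x * f x
  have hμ : μ ∈ Icc 0 B := by
    refine ⟨sum_nonneg fun x _ => mul_nonneg (hη0 x) (hf x).1, ?_⟩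
    calc μ ≤ ∑ x, η x * B := sum_le_sum fun x _ => mul_le_mul_of_nonneg_left (hf x).2 (hη0 x)
      _ = B := by rw [← sum_mul, hη, one_mul]
  set g : X → ℝ := fun x => f x - μ
  have hg : ∑ x, η x * g x = 0 := by simp [g, μ, mul_sub, sum_sub_distrib, ← sum_mul, hη]
  have hgB : ∀ x, g x ^ 2 ≤ B ^ 2 := fun x =>
    sq_le_sq' (by linarith [(hf x).1, hμ.2]) (by linarith [(hf x).2, hμ.1])
  have hV : ∑ x, η x * g x ^ 2 ≤ B ^ 2 := by
    calc ∑ x, η x * g x ^ 2 ≤ ∑ x, η x * B ^ 2 :=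
          sum_le_sum fun x _ => mul_le_mul_of_nonneg_left (hgB x) (hη0 x)
      _ = B ^ 2 := by rw [← sum_mul, hη, one_mul]
  have hm : (0 : ℝ) < m + 1 := by positivity
  have hw0 : ∀ ω : Fin m → X, 0 ≤ ∏ l, η (ω l) := fun ω => prod_nonneg fun l _ => hη0 (ω l)
  calc _ ≤ ∑ ω : Fin m → X, (∏ l, η (ω l)) *
          ((2 * (a₀ - μ) ^ 2 + 2 * (∑ j, g (ω j)) ^ 2) / ((m : ℝ) + 1) ^ 2) :=
        sum_le_sum fun ω _ =>
          mul_le_mul_of_nonneg_left (sq_add_sum_div_sub_le a₀ μ fun j => f (ω j)) (hw0 ω)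
    _ = (2 * (a₀ - μ) ^ 2 + 2 * (m * ∑ x, η x * g x ^ 2)) / ((m : ℝ) + 1) ^ 2 := by
        simp only [mul_div_assoc', ← sum_div, mul_add, sum_add_distrib, ← sum_mul,
          sum_prod_eq_one hη, one_mul, mul_left_comm _ (2 : ℝ), ← mul_sum,
          sum_prod_mul_sq_sum hη hg]
    _ ≤ 2 * B ^ 2 / ((m : ℝ) + 1) := by
        rw [div_le_div_iff₀ (by positivity) hm]
        have : (a₀ - μ) ^ 2 ≤ B ^ 2 :=
          sq_le_sq' (by linarith [ha₀.1, hμ.2]) (by linarith [ha₀.2, hμ.1])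
        have : (m : ℝ) * ∑ x, η x * g x ^ 2 ≤ m * B ^ 2 :=
          mul_le_mul_of_nonneg_left hV (by positivity)
        nlinarith

end IidSums

theorem abs_sum_mul_le_sum_mul {ι : Type*} [Fintype ι] {w F G : ι → ℝ} (hw : ∀ i, 0 ≤ w i)
    (hFG : ∀ i, |F i| ≤ G i) : |∑ i, w i * F i| ≤ ∑ i, w i * G i :=
  (abs_sum_le_sum_abs _ _).trans <| sum_le_sum fun i _ => by
    rw [abs_mul, abs_of_nonneg (hw i)]
    exact mul_le_mul_of_nonneg_left (hFG i) (hw i)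

theorem dist_sq_le_sq_add_sq (a b c d : ℝ) :
    dist (a, b) (c, d) ^ 2 ≤ (a - c) ^ 2 + (b - d) ^ 2 := by
  rw [Prod.dist_eq, Real.dist_eq, Real.dist_eq, ← sq_abs (a - c), ← sq_abs (b - d)]
  rcases max_cases |a - c| |b - d| with ⟨h, -⟩ | ⟨h, -⟩ <;> rw [h] <;>
    nlinarith [sq_nonneg (a - c), sq_nonneg (b - d)]

theorem abs_add_mul_add_mul_le {x y z a a' B : ℝ} (ha : a ∈ Icc 0 B) (ha' : a' ∈ Icc 0 B) :
    |(x + y) * a + z * a'| ≤ B * (|x| + |y| + |z|) :=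
  calc |(x + y) * a + z * a'| ≤ |(x + y) * a| + |z * a'| := abs_add_le _ _
    _ = |x + y| * a + |z| * a' := by
        rw [abs_mul, abs_mul, abs_of_nonneg ha.1, abs_of_nonneg ha'.1]
    _ ≤ (|x| + |y|) * B + |z| * B :=
        add_le_add (mul_le_mul (abs_add_le x y) ha.2 ha.1 (by positivity))
          (mul_le_mul_of_nonneg_left ha'.2 (abs_nonneg z))
    _ = B * (|x| + |y| + |z|) := by ring

namespace ElecModel

variable {S X0 : Type*} [Fintype S] [DecidableEq S] [Fintype X0] (M : ElecModel S X0)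

def expectTypes (s0 : S) (m : ℕ) (F : (Fin m → X0) → ℝ) : ℝ :=
  ∑ ω : Fin m → X0, (∏ j, M.eta s0 (ω j)) * F ω

def perCapitaDemand (ν : OblStrategy M) (x0 : X0) (m : ℕ) (ω : Fin m → X0) (h : ℕ → S)
    (t : ℕ) : ℝ :=
  (ν.act t x0 h + ∑ j, ν.act t (ω j) h) / ((m : ℝ) + 1)

def priceGap (ν : OblStrategy M) (s0 : S) (x0 : X0) (m : ℕ) (ω : Fin m → X0) (h : ℕ → S)
    (t : ℕ) : ℝ :=
  |M.pN m ν.toHist ν x0 ω h t - M.pTil ν s0 h t|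
    + |M.wN m ν.toHist ν x0 ω h t - M.wTil ν s0 h t|
    + |M.qN m ν.toHist ν x0 ω h t - M.qTil ν s0 h t|

variable {M}

theorem histProb_nonneg (s0 : S) (h : ℕ → S) : 0 ≤ M.histProb s0 h :=
  mul_nonneg (by split_ifs <;> norm_num) (prod_nonneg fun _ _ => M.K_nonneg _ _)

theorem prod_eta_nonneg (s0 : S) {m : ℕ} (ω : Fin m → X0) : 0 ≤ ∏ j, M.eta s0 (ω j) :=
  prod_nonneg fun j _ => M.eta_nonneg s0 (ω j)

theorem avgDemand_mem (ν : OblStrategy M) (s0 : S) (h : ℕ → S) (t : ℕ) :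
    M.avgDemand ν s0 h t ∈ Icc 0 M.B := by
  refine ⟨sum_nonneg fun x _ => mul_nonneg (M.eta_nonneg s0 x) (ν.act_mem t x h).1, ?_⟩
  calc M.avgDemand ν s0 h t ≤ ∑ x, M.eta s0 x * M.B :=
        sum_le_sum fun x _ => mul_le_mul_of_nonneg_left (ν.act_mem t x h).2 (M.eta_nonneg s0 x)
    _ = M.B := by rw [← sum_mul, M.eta_sum s0, one_mul]

theorem perCapitaDemand_mem (ν : OblStrategy M) (x0 : X0) (m : ℕ) (ω : Fin m → X0)
    (h : ℕ → S) (t : ℕ) : M.perCapitaDemand ν x0 m ω h t ∈ Icc 0 M.B := by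
  have hm : (0 : ℝ) < m + 1 := by positivity
  have hsum : ∑ j, ν.act t (ω j) h ≤ m * M.B := by
    simpa using sum_le_sum fun j (_ : j ∈ Finset.univ) => (ν.act_mem t (ω j) h).2
  refine ⟨div_nonneg (add_nonneg (ν.act_mem t x0 h).1
    (sum_nonneg fun j _ => (ν.act_mem t (ω j) h).1)) hm.le, ?_⟩
  rw [perCapitaDemand, div_le_iff₀ hm]
  linarith [(ν.act_mem t x0 h).2]

theorem iTraj_toHist (m : ℕ) (ν : OblStrategy M) (x0 : X0) (ω : Fin m → X0) (h : ℕ → S)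
    (t : ℕ) :
    M.iTraj m ν.toHist ν x0 ω h t = (ν.act t x0 h, M.zTraj x0 h (fun τ => ν.act τ x0 h) t) := by
  induction t with
  | zero => rfl
  | succ t ih => simp only [iTraj, ih]; rfl

theorem aggDemandN_toHist_div (m : ℕ) (ν : OblStrategy M) (x0 : X0) (ω : Fin m → X0)
    (h : ℕ → S) (t : ℕ) :
    M.aggDemandN m ν.toHist ν x0 ω h t / ((m : ℝ) + 1) = M.perCapitaDemand ν x0 m ω h t := by
  rw [aggDemandN, iTraj_toHist, perCapitaDemand]

theorem expectTypes_sq_perCapitaDemand_sub_le (ν : OblStrategy M) (s0 : S) (x0 : X0) (m : ℕ)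
    (h : ℕ → S) (t : ℕ) :
    (M.expectTypes s0 m fun ω => (M.perCapitaDemand ν x0 m ω h t - M.avgDemand ν s0 h t) ^ 2)
      ≤ 2 * M.B ^ 2 / ((m : ℝ) + 1) := by
  unfold expectTypes perCapitaDemand avgDemand
  exact sum_prod_mul_sq_avg_sub_le (η := M.eta s0) (f := fun x => ν.act t x h)
    (M.eta_nonneg s0) (M.eta_sum s0) (fun x => ν.act_mem t x h) (ν.act_mem t x0 h)

theorem tendsto_expectTypes_dist_sq (ν : OblStrategy M) (s0 : S) (x0 : X0) (h : ℕ → S)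
    (t : ℕ) :
    Tendsto (fun m => M.expectTypes s0 m fun ω =>
        dist (M.perCapitaDemand ν x0 m ω h (t - 1), M.perCapitaDemand ν x0 m ω h t)
          (M.avgDemand ν s0 h (t - 1), M.avgDemand ν s0 h t) ^ 2) atTop (𝓝 0) := by
  have hlim : Tendsto (fun m : ℕ => 4 * M.B ^ 2 / ((m : ℝ) + 1)) atTop (𝓝 0) :=
    tendsto_const_nhds.div_atTop (tendsto_natCast_atTop_atTop.atTop_add tendsto_const_nhds)
  refine squeeze_zero (fun m => sum_nonneg fun ω _ =>
    mul_nonneg (prod_eta_nonneg s0 ω) (sq_nonneg _)) (fun m => ?_) hlim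
  calc _ ≤ (M.expectTypes s0 m fun ω =>
          (M.perCapitaDemand ν x0 m ω h (t - 1) - M.avgDemand ν s0 h (t - 1)) ^ 2)
        + M.expectTypes s0 m fun ω =>
          (M.perCapitaDemand ν x0 m ω h t - M.avgDemand ν s0 h t) ^ 2 := by
        rw [expectTypes, expectTypes, expectTypes, ← sum_add_distrib]
        refine sum_le_sum fun ω _ => ?_
        rw [← mul_add]
        refine mul_le_mul_of_nonneg_left ?_ (prod_eta_nonneg s0 ω)
        exact dist_sq_le_sq_add_sq ..
    _ ≤ 2 * M.B ^ 2 / ((m : ℝ) + 1) + 2 * M.B ^ 2 / ((m : ℝ) + 1) :=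
        add_le_add (expectTypes_sq_perCapitaDemand_sub_le ..)
          (expectTypes_sq_perCapitaDemand_sub_le ..)
    _ = 4 * M.B ^ 2 / ((m : ℝ) + 1) := by ring

/-- The prices of stage `t` depend on the demands of stages `t - 1` and `t`; at `t = 0` the
truncated `t - 1` is `0` and the first coordinate is ignored. -/
theorem tendsto_expectTypes_abs_sub (ν : OblStrategy M) (s0 : S) (x0 : X0) (h : ℕ → S)
    (t : ℕ) {G : ℝ × ℝ → ℝ} {P : ℝ}
    (hG : ContinuousWithinAt G (Icc 0 M.B ×ˢ Icc 0 M.B)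
      (M.avgDemand ν s0 h (t - 1), M.avgDemand ν s0 h t))
    (hP : ∀ x ∈ Icc 0 M.B ×ˢ Icc 0 M.B, |G x| ≤ P) :
    Tendsto (fun m => M.expectTypes s0 m fun ω =>
        |G (M.perCapitaDemand ν x0 m ω h (t - 1), M.perCapitaDemand ν x0 m ω h t)
          - G (M.avgDemand ν s0 h (t - 1), M.avgDemand ν s0 h t)|) atTop (𝓝 0) := by
  have hx₀ : (M.avgDemand ν s0 h (t - 1), M.avgDemand ν s0 h t) ∈ Icc 0 M.B ×ˢ Icc 0 M.B :=
    ⟨avgDemand_mem .., avgDemand_mem ..⟩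
  have key := tendsto_sum_mul_dist_of_continuousWithinAt (ι := fun m => Fin m → X0)
    (w := fun _ ω => ∏ j, M.eta s0 (ω j)) (D := Icc 0 M.B ×ˢ Icc 0 M.B)
    (x₀ := (M.avgDemand ν s0 h (t - 1), M.avgDemand ν s0 h t))
    (Y := fun m ω => (M.perCapitaDemand ν x0 m ω h (t - 1), M.perCapitaDemand ν x0 m ω h t))
    (fun _ => prod_eta_nonneg s0)
    (fun m => sum_prod_eq_one (M.eta_sum s0) m)
    (fun _ _ => ⟨perCapitaDemand_mem .., perCapitaDemand_mem ..⟩)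
    (tendsto_expectTypes_dist_sq ν s0 x0 h t) hG (K := 2 * P) fun x hx =>
      (abs_sub _ _).trans (by linarith [hP x hx, hP _ hx₀])
  simpa only [expectTypes, Real.dist_eq] using key

namespace RegularAssumptions

variable {P Q : ℝ}

theorem continuousWithinAt_dC (hreg : M.RegularAssumptions P Q) (s : S) {A A' : ℝ}
    (hA' : A' ∈ Icc 0 M.B) :
    ContinuousWithinAt (fun p : ℝ × ℝ => M.dC p.2 s) (Icc 0 M.B ×ˢ Icc 0 M.B) (A, A') :=
  continuousWithinAt_uncurry_of_equicontinuous (F := fun _ b => M.dC b s)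
    (fun ε hε => (hreg.equicont_C ε hε).imp fun _ ⟨hδ, H⟩ =>
      ⟨hδ, fun _ _ b hb => H s b hb.1 A' hA'.1⟩)
    continuousWithinAt_const

theorem continuousWithinAt_dH0 (hreg : M.RegularAssumptions P Q) (s : S) {A A' : ℝ}
    (hA' : A' ∈ Icc 0 M.B) :
    ContinuousWithinAt (fun p : ℝ × ℝ => M.dH0 p.2 s) (Icc 0 M.B ×ˢ Icc 0 M.B) (A, A') :=
  continuousWithinAt_uncurry_of_equicontinuous (F := fun _ b => M.dH0 b s)
    (fun ε hε => (hreg.equicont_H0 ε hε).imp fun _ ⟨hδ, H⟩ =>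
      ⟨hδ, fun _ _ b hb => H s b hb.1 A' hA'.1⟩)
    continuousWithinAt_const

theorem continuousWithinAt_dH2 (hreg : M.RegularAssumptions P Q) (s s' : S) {A A' : ℝ}
    (hA : A ∈ Icc 0 M.B) (hA' : A' ∈ Icc 0 M.B) :
    ContinuousWithinAt (fun p : ℝ × ℝ => M.dH2 p.1 p.2 s s') (Icc 0 M.B ×ˢ Icc 0 M.B) (A, A') :=
  continuousWithinAt_uncurry_of_equicontinuous (F := fun a b => M.dH2 a b s s')
    (fun ε hε => (hreg.equicont_H2 ε hε).imp fun _ ⟨hδ, H⟩ =>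
      ⟨hδ, fun a ha b hb => H s s' a ha b hb.1 A' hA'.1⟩)
    (continuousWithinAt_of_hasDerivWithinAt_of_equicontinuous (G := fun a w => M.Hc a w s s')
      hA hA'.1 (fun a _ w hw => hreg.deriv_H2 s s' a w hw)
      (fun ε hε => (hreg.equicont_H2 ε hε).imp fun _ ⟨hδ, H⟩ =>
        ⟨hδ, fun a ha w hw => H s s' a ha w hw A' hA'.1⟩)
      fun w => (hreg.deriv_H1 s s' w A hA.1).continuousWithinAt.mono Icc_subset_Ici_self)

theorem continuousWithinAt_dH1 (hreg : M.RegularAssumptions P Q) (s s' : S) {A A' : ℝ}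
    (hA : A ∈ Icc 0 M.B) (hA' : A' ∈ Icc 0 M.B) :
    ContinuousWithinAt (fun p : ℝ × ℝ => M.dH1 p.1 p.2 s s') (Icc 0 M.B ×ˢ Icc 0 M.B)
      (A, A') := by
  have hswap : ContinuousWithinAt (Function.uncurry fun b a => M.dH1 a b s s')
      (Icc 0 M.B ×ˢ Icc 0 M.B) (A', A) :=
    continuousWithinAt_uncurry_of_equicontinuous
      (fun ε hε => (hreg.equicont_H1 ε hε).imp fun _ ⟨hδ, H⟩ =>
        ⟨hδ, fun b hb a ha => H s s' b hb a ha.1 A hA.1⟩)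
      (continuousWithinAt_of_hasDerivWithinAt_of_equicontinuous (G := fun b w => M.Hc w b s s')
        hA' hA.1 (fun b _ w hw => hreg.deriv_H1 s s' b w hw)
        (fun ε hε => (hreg.equicont_H1 ε hε).imp fun _ ⟨hδ, H⟩ =>
          ⟨hδ, fun b hb w hw => H s s' b hb w hw A hA.1⟩)
        fun w => (hreg.deriv_H2 s s' w A' hA'.1).continuousWithinAt.mono Icc_subset_Ici_self)
  exact hswap.comp (x := (A, A')) continuous_swap.continuousWithinAt (mapsTo_swap_prod _ _)

end RegularAssumptions

variable {P Q : ℝ} (ν : OblStrategy M) (s0 : S) (x0 : X0) (h : ℕ → S)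

theorem tendsto_expectTypes_abs_pN_sub_pTil (hreg : M.RegularAssumptions P Q) (t : ℕ) :
    Tendsto (fun m => M.expectTypes s0 m fun ω =>
      |M.pN m ν.toHist ν x0 ω h t - M.pTil ν s0 h t|) atTop (𝓝 0) := by
  simpa only [pN, pTil, aggDemandN_toHist_div] using tendsto_expectTypes_abs_sub ν s0 x0 h t
    (hreg.continuousWithinAt_dC (h t) (avgDemand_mem ν s0 h t))
    fun x hx => hreg.bound_C (h t) x.2 hx.2.1

theorem tendsto_expectTypes_abs_wN_sub_wTil (hreg : M.RegularAssumptions P Q) (t : ℕ) :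
    Tendsto (fun m => M.expectTypes s0 m fun ω =>
      |M.wN m ν.toHist ν x0 ω h t - M.wTil ν s0 h t|) atTop (𝓝 0) := by
  cases t with
  | zero =>
    simpa only [wN, wTil, aggDemandN_toHist_div] using tendsto_expectTypes_abs_sub ν s0 x0 h 0
      (hreg.continuousWithinAt_dH0 (h 0) (avgDemand_mem ν s0 h 0))
      fun x hx => hreg.bound_H0 (h 0) x.2 hx.2.1
  | succ u =>
    simpa only [wN, wTil, aggDemandN_toHist_div, Nat.add_sub_cancel] using
      tendsto_expectTypes_abs_sub ν s0 x0 h (u + 1)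
      (hreg.continuousWithinAt_dH2 (h u) (h (u + 1)) (avgDemand_mem ν s0 h u)
        (avgDemand_mem ν s0 h (u + 1)))
      fun x hx => hreg.bound_H2 (h u) (h (u + 1)) x.1 hx.1 x.2 hx.2.1

theorem tendsto_expectTypes_abs_qN_sub_qTil (hreg : M.RegularAssumptions P Q) (t : ℕ) :
    Tendsto (fun m => M.expectTypes s0 m fun ω =>
      |M.qN m ν.toHist ν x0 ω h t - M.qTil ν s0 h t|) atTop (𝓝 0) := by
  cases t with
  | zero => simp [qN, qTil, expectTypes]
  | succ u =>
    simpa only [qN, qTil, aggDemandN_toHist_div, Nat.add_sub_cancel] using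
      tendsto_expectTypes_abs_sub ν s0 x0 h (u + 1)
      (hreg.continuousWithinAt_dH1 (h u) (h (u + 1)) (avgDemand_mem ν s0 h u)
        (avgDemand_mem ν s0 h (u + 1)))
      fun x hx => hreg.bound_H1 (h u) (h (u + 1)) x.2 hx.2 x.1 hx.1.1

theorem tendsto_expectTypes_priceGap (hreg : M.RegularAssumptions P Q) (t : ℕ) :
    Tendsto (fun m => M.expectTypes s0 m fun ω => M.priceGap ν s0 x0 m ω h t) atTop (𝓝 0) := by
  have hsum := ((tendsto_expectTypes_abs_pN_sub_pTil ν s0 x0 h hreg t).add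
    (tendsto_expectTypes_abs_wN_sub_wTil ν s0 x0 h hreg t)).add
    (tendsto_expectTypes_abs_qN_sub_qTil ν s0 x0 h hreg t)
  rw [add_zero, add_zero] at hsum
  refine hsum.congr fun m => ?_
  simp only [expectTypes, priceGap, mul_add, sum_add_distrib]

theorem abs_oblStageSum_sub_iPayoff_le (m : ℕ) (ω : Fin m → X0) :
    |M.oblStageSum ν ν s0 x0 h - M.iPayoff m ν.toHist ν x0 ω h|
      ≤ M.B * ∑ t ∈ range (M.T + 1), M.priceGap ν s0 x0 m ω h t := by
  rw [oblStageSum, iPayoff, ← sum_sub_distrib, mul_sum]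
  refine (abs_sum_le_sum_abs _ _).trans (sum_le_sum fun t _ => ?_)
  have hprev : (if t = 0 then 0 else ν.act (t - 1) x0 h) ∈ Icc 0 M.B := by
    split_ifs
    exacts [⟨le_rfl, M.B_pos.le⟩, ν.act_mem _ _ _]
  simp only [iTraj_toHist, priceGap]
  exact (congrArg abs (by ring)).trans_le (abs_add_mul_add_mul_le (ν.act_mem t x0 h) hprev)

theorem abs_oblValue_sub_Vn_le (m : ℕ) :
    |M.oblValue ν ν x0 s0 - M.Vn m ν.toHist ν x0 s0|
      ≤ M.expectHist s0 fun h => M.B * ∑ t ∈ range (M.T + 1),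
          M.expectTypes s0 m fun ω => M.priceGap ν s0 x0 m ω h t := by
  have hsplit : M.oblValue ν ν x0 s0 - M.Vn m ν.toHist ν x0 s0 = M.expectTypes s0 m fun ω =>
      M.expectHist s0 fun h => M.oblStageSum ν ν s0 x0 h - M.iPayoff m ν.toHist ν x0 ω h := by
    simp only [Vn, oblValue, expectTypes, expectHist, mul_sub, sum_sub_distrib, ← sum_mul,
      sum_prod_eq_one (M.eta_sum s0), one_mul]
  rw [hsplit]
  calc _ ≤ M.expectTypes s0 m fun ω => M.expectHist s0 fun h =>
          M.B * ∑ t ∈ range (M.T + 1), M.priceGap ν s0 x0 m ω h t :=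
        abs_sum_mul_le_sum_mul (prod_eta_nonneg s0) fun ω =>
          abs_sum_mul_le_sum_mul (fun _ => histProb_nonneg s0 _) fun g =>
            abs_oblStageSum_sub_iPayoff_le ν s0 x0 _ m ω
    _ = _ := by
        simp only [expectTypes, expectHist, mul_sum]
        rw [sum_comm]
        refine sum_congr rfl fun g _ => ?_
        rw [sum_comm]
        exact sum_congr rfl fun t _ => sum_congr rfl fun ω _ => by ring

end ElecModel

open ElecModel in
theorem oblivious_value_asymptotically_achieved_general
    {S : Type*} {X0 : Type*} [Fintype S] [DecidableEq S] [Fintype X0]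
    (M : ElecModel S X0) (P Q : ℝ)
    (hreg : RegularAssumptions M P Q)
    (ν : OblStrategy M) :
    ∀ (s0 : S) (x0 : X0),
      Filter.Tendsto
        (fun n : ℕ => M.oblValue ν ν x0 s0 - M.Vn (n - 1) ν.toHist ν x0 s0)
        Filter.atTop (nhds 0) := by
  intro s0 x0
  have hgap : ∀ h, Tendsto (fun m => M.B * ∑ t ∈ range (M.T + 1),
      M.expectTypes s0 m fun ω => M.priceGap ν s0 x0 m ω h t) atTop (𝓝 0) := fun h => by
    simpa using (tendsto_finsetSum _ fun t _ =>
      tendsto_expectTypes_priceGap ν s0 x0 h hreg t).const_mul M.B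
  have hbound : Tendsto (fun m => M.expectHist s0 fun h => M.B * ∑ t ∈ range (M.T + 1),
      M.expectTypes s0 m fun ω => M.priceGap ν s0 x0 m ω h t) atTop (𝓝 0) := by
    simpa only [expectHist, mul_zero, sum_const_zero] using tendsto_finsetSum univ fun g _ =>
      (hgap (M.extendHist g)).const_mul (M.histProb s0 (M.extendHist g))
  exact squeeze_zero_norm (fun n => abs_oblValue_sub_Vn_le ν s0 x0 (n - 1))
    (hbound.comp (tendsto_sub_atTop_nat 1))

open ElecModel in
/-- Step 4 of the proof of Theorem 1. A consumer's optimal oblivious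
value is asymptotically achieved in the `n`-consumer game under a DOE strategy: if all
consumers (including `i`) use a DOE strategy `ν` of the continuum game, then
`lim_{n→∞} (Ṽ(x0, s0 ∣ ν, ν) - Vⁿ(x0, s0 ∣ ν, ν)) = 0`. -/
theorem oblivious_value_asymptotically_achieved
    {S : Type*} {X0 : Type*} [Fintype S] [DecidableEq S] [Fintype X0] [DecidableEq X0]
    (M : ElecModel S X0) (P Q : ℝ)
    (hreg : RegularAssumptions M P Q)
    (ν : OblStrategy M) (hDOE : M.IsDOE ν) :
    ∀ (s0 : S) (x0 : X0),
      Filter.Tendsto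
        (fun n : ℕ => M.oblValue ν ν x0 s0 - M.Vn (n - 1) ν.toHist ν x0 s0)
        Filter.atTop (nhds 0) :=
  oblivious_value_asymptotically_achieved_general M P Q hreg ν
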